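/- Let q \ge 3 and d \le e. For all 0 \le i \le d-1 and 1 \le j \le d, the eigenvalues of the bilinear forms graph satisfy |B_j(i)| > |B_j(i+1)|. -/

import Mathlib

/-- The Gaussian binomial coefficient `[m choose l]_q = ∏_{t=1}^{l} (q^{m-t+1}-1)/(q^t-1)`. -/
def gaussBinom (q : ℚ) (m l : ℕ) : ℚ :=
  ∏ t ∈ Finset.range l, (q ^ (m - t) - 1) / (q ^ (t + 1) - 1)

/-- The `h`-th term of the eigenvalue expression for the bilinear forms graph `H_q(d,e,j)`:
`T_h(i,j) = (-1)^{j-h} q^{eh + C(j-h,2)} [d-h, d-j]_q [d-i, h]_q`. -/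
def bilinT (q : ℚ) (d e j i h : ℕ) : ℚ :=
  (-1 : ℚ) ^ (j - h) * q ^ (e * h + (j - h).choose 2) *
    gaussBinom q (d - h) (d - j) * gaussBinom q (d - i) h

/-- The eigenvalue `B_j(i)` of the bilinear forms graph `H_q(d,e,j)`. -/
def bilinB (q : ℚ) (d e j i : ℕ) : ℚ :=
  ∑ h ∈ Finset.range (min j (d - i) + 1), bilinT q d e j i h

/-!
Write `a_h(i) = |T_h(i,j)|`, so that `B_j(i) = ± Σ_{h ≤ M} (-1)^(M-h) a_h(i)` with
`M = min(j, d-i)`. For `q ≥ 3` and `d ≤ e` every ratio `a_{h+1}(i) / a_h(i)` exceeds `1`, so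
`|B_j(i)|` is the alternating sum of an increasing nonnegative sequence and lies between `0` and its
last term. If `j < d - i`, both eigenvalues are sums up to `j`, and since
`a_h(i) = a_h(i+1) [d-i, h]_q / [d-i-1, h]_q` the differences `a_h(i) - a_h(i+1)` increase as well,
so their alternating sum `|B_j(i)| - |B_j(i+1)|` is positive. If `j ≥ d - i = k + 1`, the sum for
`i + 1` stops one term earlier and `|B_j(i)| - |B_j(i+1)| ≥ a_{k+1}(i) - a_k(i) - a_k(i+1) > 0`.
-/

open Finset

section AltSum

variable {R : Type*} [CommRing R]

def altSum (f : ℕ → R) (n : ℕ) : R :=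
  ∑ h ∈ range (n + 1), (-1) ^ (n - h) * f h

theorem altSum_zero (f : ℕ → R) : altSum f 0 = f 0 := by
  simp [altSum]

theorem altSum_succ (f : ℕ → R) (n : ℕ) : altSum f (n + 1) = f (n + 1) - altSum f n := by
  rw [altSum, altSum, sum_range_succ, Nat.sub_self, pow_zero, one_mul, add_comm, sub_eq_add_neg,
    ← sum_neg_distrib]
  congr 1
  refine sum_congr rfl fun h hh => ?_
  rw [Nat.sub_add_comm (mem_range_succ_iff.1 hh), pow_succ]
  ring

theorem altSum_add (f g : ℕ → R) (n : ℕ) :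
    altSum (fun h => f h + g h) n = altSum f n + altSum g n := by
  simp only [altSum, mul_add, sum_add_distrib]

theorem altSum_sub (f g : ℕ → R) (n : ℕ) :
    altSum (fun h => f h - g h) n = altSum f n - altSum g n := by
  simp only [altSum, mul_sub, sum_sub_distrib]

variable [LinearOrder R] [IsStrictOrderedRing R]

theorem altSum_nonneg_and_le {f : ℕ → R} {n : ℕ} (h0 : 0 ≤ f 0)
    (hf : ∀ h < n, f h ≤ f (h + 1)) : 0 ≤ altSum f n ∧ altSum f n ≤ f n := by
  induction n with
  | zero => exact ⟨(altSum_zero f).symm ▸ h0, (altSum_zero f).le⟩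
  | succ n ih =>
    obtain ⟨ih₀, ih₁⟩ := ih fun h hh => hf h (by omega)
    have := hf n n.lt_succ_self
    rw [altSum_succ]
    constructor <;> linarith

theorem altSum_pos {f : ℕ → R} {n : ℕ} (h0 : 0 ≤ f 0) (hf : ∀ h < n, f h < f (h + 1))
    (hn : n ≠ 0) : 0 < altSum f n := by
  obtain ⟨m, rfl⟩ := Nat.exists_eq_succ_of_ne_zero hn
  have hle := (altSum_nonneg_and_le (n := m) h0 fun h hh => (hf h (by omega)).le).2
  rw [altSum_succ]
  linarith [hf m m.lt_succ_self]

end AltSum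

section PowInequalities

variable {R : Type*} [CommRing R] [LinearOrder R] [IsStrictOrderedRing R] {q : R}

theorem pow_pred_mul_sub_one_le (hq : 1 ≤ q) {n : ℕ} (hn : n ≠ 0) :
    q ^ (n - 1) * (q - 1) ≤ q ^ n - 1 := by
  obtain ⟨m, rfl⟩ := Nat.exists_eq_succ_of_ne_zero hn
  have := one_le_pow₀ (n := m) hq
  rw [Nat.succ_sub_one, pow_succ]
  linarith

theorem pow_sub_one_mul_pow_sub_one_lt_pow (hq : 1 ≤ q) (a b : ℕ) :
    (q ^ a - 1) * (q ^ b - 1) < q ^ (a + b) := by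
  have := one_le_pow₀ (n := a) hq
  have := one_le_pow₀ (n := b) hq
  rw [pow_add]
  nlinarith

theorem pow_mul_sq_sub_one_le (hq : 1 ≤ q) (c : ℕ) {u v : ℕ} (hu : u ≠ 0) (hv : v ≠ 0) :
    q ^ (c + (u - 1) + (v - 1)) * (q - 1) ^ 2 ≤ q ^ c * ((q ^ u - 1) * (q ^ v - 1)) := by
  have hu' := pow_pred_mul_sub_one_le hq hu
  have hv' := pow_pred_mul_sub_one_le hq hv
  have h0 : 0 ≤ q - 1 := by linarith
  calc q ^ (c + (u - 1) + (v - 1)) * (q - 1) ^ 2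
      = q ^ c * ((q ^ (u - 1) * (q - 1)) * (q ^ (v - 1) * (q - 1))) := by ring
    _ ≤ q ^ c * ((q ^ u - 1) * (q ^ v - 1)) := by gcongr; linarith [one_le_pow₀ (n := u) hq]

theorem pow_sub_one_mul_pow_sub_one_lt (hq : 3 ≤ q) {a b c u v : ℕ}
    (hu : u ≠ 0) (hv : v ≠ 0) (h : a + b < c + u + v) :
    (q ^ a - 1) * (q ^ b - 1) < q ^ c * ((q ^ u - 1) * (q ^ v - 1)) :=
  calc (q ^ a - 1) * (q ^ b - 1) < q ^ (a + b) :=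
        pow_sub_one_mul_pow_sub_one_lt_pow (by linarith) a b
    _ ≤ q ^ (c + (u - 1) + (v - 1) + 1) := pow_le_pow_right₀ (by linarith) (by omega)
    _ ≤ q ^ (c + (u - 1) + (v - 1)) * (q - 1) ^ 2 := by
        rw [pow_succ]; gcongr; nlinarith
    _ ≤ q ^ c * ((q ^ u - 1) * (q ^ v - 1)) := pow_mul_sq_sub_one_le (by linarith) c hu hv

theorem pow_sub_one_mul_pow_add_sub_two_lt (hq : 3 ≤ q) {s k c u : ℕ} (hu : u ≠ 0)
    (h : s + k < c + u) :
    (q ^ s - 1) * (q ^ (k + 1) + q - 2) < q ^ c * ((q ^ u - 1) * (q - 1)) := by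
  have hs := one_le_pow₀ (n := s) (show (1 : R) ≤ q by linarith)
  have hsk : q ^ (s + k) * (q - 1) ^ 2 ≤ q ^ c * ((q ^ u - 1) * (q - 1)) := by
    calc q ^ (s + k) * (q - 1) ^ 2 ≤ q ^ (c + (u - 1) + (1 - 1)) * (q - 1) ^ 2 :=
          mul_le_mul_of_nonneg_right (pow_le_pow_right₀ (by linarith) (by omega)) (sq_nonneg _)
      _ ≤ q ^ c * ((q ^ u - 1) * (q ^ 1 - 1)) :=
          pow_mul_sq_sub_one_le (by linarith) c hu one_ne_zero
      _ = q ^ c * ((q ^ u - 1) * (q - 1)) := by rw [pow_one]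
  refine lt_of_lt_of_le ?_ hsk
  rcases Nat.eq_zero_or_pos k with rfl | hk
  · rw [add_zero, zero_add, pow_one]
    have : 0 < (q - 1) * (q ^ s * (q - 3) + 2) := mul_pos (by linarith) (by nlinarith)
    nlinarith
  · have hqk : q ^ s * q ≤ q ^ (s + k) := by
      rw [← pow_succ]; exact pow_le_pow_right₀ (by linarith) (by omega)
    have hsk1 : q ^ s * q ^ (k + 1) = q ^ (s + k) * q := by
      rw [← pow_add, ← pow_succ, add_assoc]
    have hk1 := one_le_pow₀ (n := k + 1) (show (1 : R) ≤ q by linarith)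
    calc (q ^ s - 1) * (q ^ (k + 1) + q - 2) < q ^ s * (q ^ (k + 1) + q) := by nlinarith
      _ ≤ q ^ (s + k) * (q + 1) := by rw [mul_add, hsk1]; linarith
      _ ≤ q ^ (s + k) * (q - 1) ^ 2 := by gcongr; nlinarith

end PowInequalities

theorem choose_two_sub_succ {h j : ℕ} (hhj : h < j) :
    (j - h).choose 2 = (j - (h + 1)).choose 2 + (j - h - 1) := by
  obtain ⟨u, hu⟩ : ∃ u, j - h = u + 1 := ⟨j - h - 1, by omega⟩
  rw [hu, show j - (h + 1) = u by omega, Nat.add_sub_cancel, Nat.choose_succ_succ' u 1,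
    Nat.choose_one_right, add_comm]

section GaussBinom

variable {q : ℚ}

theorem gaussBinom_nonneg (hq : 1 ≤ q) (m l : ℕ) : 0 ≤ gaussBinom q m l :=
  prod_nonneg fun _ _ =>
    div_nonneg (sub_nonneg.2 (one_le_pow₀ hq)) (sub_nonneg.2 (one_le_pow₀ hq))

theorem gaussBinom_pos (hq : 1 < q) {m l : ℕ} (h : l ≤ m) : 0 < gaussBinom q m l :=
  prod_pos fun t ht => div_pos (sub_pos.2 (one_lt_pow₀ hq (by simp at ht; omega)))
    (sub_pos.2 (one_lt_pow₀ hq t.succ_ne_zero))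

theorem gaussBinom_succ_right_mul (hq : 1 < q) (m l : ℕ) :
    gaussBinom q m (l + 1) * (q ^ (l + 1) - 1) = gaussBinom q m l * (q ^ (m - l) - 1) := by
  have : q ^ (l + 1) - 1 ≠ 0 := (sub_pos.2 (one_lt_pow₀ hq l.succ_ne_zero)).ne'
  rw [gaussBinom, prod_range_succ, ← gaussBinom]
  field_simp

theorem gaussBinom_succ_left_mul (hq : 1 < q) {m l : ℕ} (h : l ≤ m) :
    gaussBinom q (m + 1) l * (q ^ (m + 1 - l) - 1) = gaussBinom q m l * (q ^ (m + 1) - 1) := by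
  induction l with
  | zero => simp [gaussBinom]
  | succ l ih =>
    have hl : q ^ (l + 1) - 1 ≠ 0 := (sub_pos.2 (one_lt_pow₀ hq l.succ_ne_zero)).ne'
    have ih := ih (by omega)
    have hm := gaussBinom_succ_right_mul hq m l
    have hm1 := gaussBinom_succ_right_mul hq (m + 1) l
    rw [show m + 1 - l = m - l + 1 by omega] at ih hm1
    rw [show m + 1 - (l + 1) = m - l by omega]
    refine mul_right_cancel₀ hl ?_
    linear_combination (q ^ (m - l) - 1) * hm1 + (q ^ (m - l) - 1) * ih - (q ^ (m + 1) - 1) * hm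

end GaussBinom

section Bilinear

variable {q : ℚ} {d e j i h : ℕ}

def bilinTAbs (q : ℚ) (d e j i h : ℕ) : ℚ :=
  q ^ (e * h + (j - h).choose 2) * (gaussBinom q (d - h) (d - j) * gaussBinom q (d - i) h)

theorem bilinB_eq_neg_one_pow_mul_altSum :
    bilinB q d e j i =
      (-1) ^ (j - min j (d - i)) * altSum (bilinTAbs q d e j i) (min j (d - i)) := by
  rw [bilinB, altSum, mul_sum]
  refine sum_congr rfl fun h hh => ?_
  have hh := mem_range_succ_iff.1 hh
  rw [bilinT, bilinTAbs, show j - h = j - min j (d - i) + (min j (d - i) - h) by omega, pow_add]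
  ring

theorem bilinTAbs_nonneg (hq : 1 ≤ q) : 0 ≤ bilinTAbs q d e j i h :=
  mul_nonneg (pow_nonneg (by linarith) _)
    (mul_nonneg (gaussBinom_nonneg hq _ _) (gaussBinom_nonneg hq _ _))

theorem bilinTAbs_pos (hq : 1 < q) (hhj : h ≤ j) (hh : h ≤ d - i) : 0 < bilinTAbs q d e j i h :=
  mul_pos (pow_pos (by linarith) _)
    (mul_pos (gaussBinom_pos hq (by omega)) (gaussBinom_pos hq hh))

theorem bilinTAbs_succ_mul (hq : 1 < q) (hde : d ≤ e) (hjd : j ≤ d) (hhj : h + 1 ≤ j) :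
    bilinTAbs q d e j i (h + 1) * ((q ^ (d - h) - 1) * (q ^ (h + 1) - 1)) =
      bilinTAbs q d e j i h *
        (q ^ (e - (j - h - 1)) * ((q ^ (j - h) - 1) * (q ^ (d - i - h) - 1))) := by
  have hexp : q ^ (e * (h + 1) + (j - (h + 1)).choose 2) =
      q ^ (e * h + (j - h).choose 2) * q ^ (e - (j - h - 1)) := by
    rw [← pow_add, choose_two_sub_succ (show h < j by omega)]
    congr 1
    rw [Nat.mul_succ]
    omega
  have hleft : gaussBinom q (d - h) (d - j) * (q ^ (j - h) - 1) =
      gaussBinom q (d - (h + 1)) (d - j) * (q ^ (d - h) - 1) := by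
    have := gaussBinom_succ_left_mul hq (q := q) (m := d - (h + 1)) (l := d - j) (by omega)
    rwa [show d - (h + 1) + 1 = d - h by omega, show d - h - (d - j) = j - h by omega] at this
  have hright := gaussBinom_succ_right_mul hq (d - i) h
  rw [bilinTAbs, bilinTAbs, hexp]
  linear_combination q ^ (e * h + (j - h).choose 2) * q ^ (e - (j - h - 1)) *
    (-(gaussBinom q (d - i) (h + 1) * (q ^ (h + 1) - 1)) * hleft +
      gaussBinom q (d - h) (d - j) * (q ^ (j - h) - 1) * hright)

theorem bilinTAbs_lt_succ (hq : 3 ≤ q) (hde : d ≤ e) (hjd : j ≤ d) (hhj : h + 1 ≤ j)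
    (hh : h + 1 ≤ d - i) : bilinTAbs q d e j i h < bilinTAbs q d e j i (h + 1) := by
  have hq1 : 1 < q := by linarith
  have hD : 0 < (q ^ (d - h) - 1) * (q ^ (h + 1) - 1) :=
    mul_pos (sub_pos.2 (one_lt_pow₀ hq1 (by omega)))
      (sub_pos.2 (one_lt_pow₀ hq1 h.succ_ne_zero))
  have hratio := pow_sub_one_mul_pow_sub_one_lt hq (a := d - h) (b := h + 1)
    (c := e - (j - h - 1)) (u := j - h) (v := d - i - h) (by omega) (by omega) (by omega)
  refine lt_of_mul_lt_mul_right ?_ hD.le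
  rw [bilinTAbs_succ_mul hq1 hde hjd hhj]
  exact mul_lt_mul_of_pos_left hratio (bilinTAbs_pos hq1 (by omega) (by omega))

theorem abs_bilinB (hq : 3 ≤ q) (hde : d ≤ e) (hjd : j ≤ d) :
    |bilinB q d e j i| = altSum (bilinTAbs q d e j i) (min j (d - i)) := by
  have hnonneg := (altSum_nonneg_and_le (f := bilinTAbs q d e j i) (n := min j (d - i))
    (bilinTAbs_nonneg (by linarith))
    fun h hh => (bilinTAbs_lt_succ hq hde hjd (by omega) (by omega)).le).1
  rw [bilinB_eq_neg_one_pow_mul_altSum, abs_mul, abs_pow, abs_neg, abs_one, one_pow, one_mul,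
    abs_of_nonneg hnonneg]

theorem bilinTAbs_eq_mul_div (hq : 1 < q) (hh : h < d - i) :
    bilinTAbs q d e j i h =
      bilinTAbs q d e j (i + 1) h * ((q ^ (d - i) - 1) / (q ^ (d - i - h) - 1)) := by
  have hcol := gaussBinom_succ_left_mul hq (q := q) (m := d - (i + 1)) (l := h) (by omega)
  rw [show d - (i + 1) + 1 = d - i by omega] at hcol
  have hne : q ^ (d - i - h) - 1 ≠ 0 := (sub_pos.2 (one_lt_pow₀ hq (by omega))).ne'
  rw [mul_div_assoc', eq_div_iff hne, bilinTAbs, bilinTAbs]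
  linear_combination q ^ (e * h + (j - h).choose 2) * gaussBinom q (d - h) (d - j) * hcol

theorem bilinTAbs_sub_succ_lt (hq : 3 ≤ q) (hde : d ≤ e) (hhj : h + 1 ≤ j) (hji : j < d - i) :
    bilinTAbs q d e j i h - bilinTAbs q d e j (i + 1) h <
      bilinTAbs q d e j i (h + 1) - bilinTAbs q d e j (i + 1) (h + 1) := by
  have hq1 : 1 < q := by linarith
  have hsub : ∀ t < d - i, bilinTAbs q d e j i t - bilinTAbs q d e j (i + 1) t =
      bilinTAbs q d e j (i + 1) t * ((q ^ (d - i) - 1) / (q ^ (d - i - t) - 1) - 1) :=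
    fun t ht => by rw [bilinTAbs_eq_mul_div hq1 ht]; ring
  rw [hsub h (by omega), hsub (h + 1) (by omega)]
  have hden : 0 < q ^ (d - i - (h + 1)) - 1 := sub_pos.2 (one_lt_pow₀ hq1 (by omega))
  have hden_lt : q ^ (d - i - (h + 1)) - 1 < q ^ (d - i - h) - 1 :=
    sub_lt_sub_right (pow_lt_pow_right₀ hq1 (by omega)) 1
  have hr0 : 0 ≤ (q ^ (d - i) - 1) / (q ^ (d - i - h) - 1) - 1 :=
    sub_nonneg.2 ((one_le_div (hden.trans hden_lt)).2
      (sub_le_sub_right (pow_le_pow_right₀ hq1.le (by omega)) 1))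
  have hr : (q ^ (d - i) - 1) / (q ^ (d - i - h) - 1) <
      (q ^ (d - i) - 1) / (q ^ (d - i - (h + 1)) - 1) :=
    div_lt_div_of_pos_left (sub_pos.2 (one_lt_pow₀ hq1 (by omega))) hden hden_lt
  calc bilinTAbs q d e j (i + 1) h * ((q ^ (d - i) - 1) / (q ^ (d - i - h) - 1) - 1)
      ≤ bilinTAbs q d e j (i + 1) (h + 1) * ((q ^ (d - i) - 1) / (q ^ (d - i - h) - 1) - 1) :=
        mul_le_mul_of_nonneg_right (bilinTAbs_lt_succ hq hde (by omega) hhj (by omega)).le hr0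
    _ < bilinTAbs q d e j (i + 1) (h + 1) *
          ((q ^ (d - i) - 1) / (q ^ (d - i - (h + 1)) - 1) - 1) :=
        mul_lt_mul_of_pos_left (sub_lt_sub_right hr 1) (bilinTAbs_pos hq1 hhj (by omega))

theorem bilinTAbs_add_succ_lt (hq : 3 ≤ q) (hde : d ≤ e) (hjd : j ≤ d) {k : ℕ}
    (hk : d - i = k + 1) (hkj : k + 1 ≤ j) :
    bilinTAbs q d e j i k + bilinTAbs q d e j (i + 1) k < bilinTAbs q d e j i (k + 1) := by
  have hq1 : 1 < q := by linarith
  have hcol :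
      bilinTAbs q d e j i k * (q - 1) = bilinTAbs q d e j (i + 1) k * (q ^ (k + 1) - 1) := by
    rw [bilinTAbs_eq_mul_div hq1 (by omega), hk, show k + 1 - k = 1 by omega, pow_one]
    field_simp [(sub_pos.2 hq1).ne']
  have hstep := bilinTAbs_succ_mul hq1 hde hjd hkj (i := i)
  rw [show d - i - k = 1 by omega, pow_one] at hstep
  have hineq := pow_sub_one_mul_pow_add_sub_two_lt hq (s := d - k) (k := k)
    (c := e - (j - k - 1)) (u := j - k) (by omega) (by omega)
  have hD : 0 < (q ^ (d - k) - 1) * (q ^ (k + 1) - 1) * (q - 1) :=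
    mul_pos (mul_pos (sub_pos.2 (one_lt_pow₀ hq1 (by omega)))
      (sub_pos.2 (one_lt_pow₀ hq1 k.succ_ne_zero))) (sub_pos.2 hq1)
  have hX : 0 < bilinTAbs q d e j (i + 1) k * (q ^ (k + 1) - 1) :=
    mul_pos (bilinTAbs_pos hq1 (by omega) (by omega)) (sub_pos.2 (one_lt_pow₀ hq1 k.succ_ne_zero))
  refine lt_of_mul_lt_mul_right ?_ hD.le
  linear_combination mul_lt_mul_of_pos_left hineq hX
    + (q ^ (d - k) - 1) * (q ^ (k + 1) - 1) * hcol
    - q ^ (e - (j - k - 1)) * ((q ^ (j - k) - 1) * (q - 1)) * hcol - (q - 1) * hstep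

end Bilinear

theorem bilinB_abs_strict_anti (q d e i j : ℕ) (hq : 3 ≤ q) (hde : d ≤ e)
    (hi : i ≤ d - 1) (hj1 : 1 ≤ j) (hj2 : j ≤ d) :
    |bilinB (q : ℚ) d e j (i + 1)| < |bilinB (q : ℚ) d e j i| := by
  have hq' : (3 : ℚ) ≤ q := by exact_mod_cast hq
  rw [abs_bilinB hq' hde hj2, abs_bilinB hq' hde hj2]
  rcases lt_or_ge j (d - i) with hji | hij
  · rw [min_eq_left (by omega), min_eq_left hji.le]
    have hgap := altSum_pos (f := fun h => bilinTAbs q d e j i h - bilinTAbs q d e j (i + 1) h)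
      (by simp [bilinTAbs, gaussBinom]) (fun h hh => bilinTAbs_sub_succ_lt hq' hde hh hji)
      (by omega)
    rw [altSum_sub] at hgap
    linarith
  · obtain ⟨k, hk⟩ : ∃ k, d - i = k + 1 := ⟨d - i - 1, by omega⟩
    rw [min_eq_right (by omega), min_eq_right hij, hk, altSum_succ, show d - (i + 1) = k by omega]
    have hsum := (altSum_nonneg_and_le
      (f := fun h => bilinTAbs q d e j i h + bilinTAbs q d e j (i + 1) h) (n := k)
      (add_nonneg (bilinTAbs_nonneg (by linarith)) (bilinTAbs_nonneg (by linarith)))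
      fun h hh => add_le_add (bilinTAbs_lt_succ hq' hde hj2 (by omega) (by omega)).le
        (bilinTAbs_lt_succ hq' hde hj2 (by omega) (by omega)).le).2
    rw [altSum_add] at hsum
    linarith [bilinTAbs_add_succ_lt hq' hde hj2 hk (by omega)]
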